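/- arXiv:2102.11513 — 6 statements merged into one kernel-verified Lean document; each statement's English description precedes it below -/
import Mathlib

section
/- The difference of Q-value functions under true dynamics p and noisy dynamics o can be decomposed as a telescoping sum: q^π(s,a) − q^{π,o}(s,a) = Σ_{j=0}^∞ γ^{j+1} (q^{π,o}(s_{j+1}, π(s_{j+1})) − E_ε[q^{π,o}(s_{j+1}+ε, π(s_{j+1}+ε))]), where s_{j+1} follows policy π under true dynamics p for j+1 steps. -/
open MeasureTheory

/-- Telescoping decomposition of the Q-value difference under true and noisy dynamics:
`q^π(s,a) − q^{π,o}(s,a) = Σ_{j=0}^∞ γ^(j+1) (q^{π,o}(s_{j+1},π(s_{j+1})) −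
E_ε[q^{π,o}(s_{j+1}+ε, π(s_{j+1}+ε))])`, where `s_{j+1}` follows `π` under the true
dynamics `p`. -/
theorem q_value_telescoping_decomposition
    {S A : Type*} [NormedAddCommGroup S] [MeasurableSpace S]
    (p : S → A → S) (π : S → A) (r : S → A → ℝ) (γ : ℝ) (hγ : γ ∈ Set.Ioo (0:ℝ) 1)
    (ν : Measure S) [IsProbabilityMeasure ν]   -- noise distribution of ε
    (q qo : S → A → ℝ) (M : ℝ)
    -- boundedness (so all returns are finite)
    (hqB : ∀ s a, |q s a| ≤ M) (hqoB : ∀ s a, |qo s a| ≤ M)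
    (hrB : ∀ s a, |r s a| ≤ M)
    -- Bellman equation for the true dynamics
    (hBell : ∀ s a, q s a = r s a + γ * q (p s a) (π (p s a)))
    -- Bellman equation for the noisy dynamics o' = p(o,a) + ε
    (hint : ∀ s a, Integrable (fun ε => qo (p s a + ε) (π (p s a + ε))) ν)
    (hBello : ∀ s a, qo s a = r s a + γ * ∫ ε, qo (p s a + ε) (π (p s a + ε)) ∂ν)
    -- the true trajectory from (s, a) under π and p
    (s : S) (a : A) (x : ℕ → S)
    (hx0 : x 0 = s) (hx1 : x 1 = p s a)
    (hx : ∀ j : ℕ, x (j + 2) = p (x (j + 1)) (π (x (j + 1)))) :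
    HasSum
      (fun j : ℕ => γ ^ (j + 1) *
        (qo (x (j + 1)) (π (x (j + 1))) -
          ∫ ε, qo (x (j + 1) + ε) (π (x (j + 1) + ε)) ∂ν))
      (q s a - qo s a) := by
  obtain ⟨hγ0, hγ1⟩ := hγ
  have hM : 0 ≤ M := le_trans (abs_nonneg _) (hqB s a)
  -- the integral of qo shifted is bounded by M
  have hIB : ∀ y : S, |∫ ε, qo (y + ε) (π (y + ε)) ∂ν| ≤ M := by
    intro y
    calc |∫ ε, qo (y + ε) (π (y + ε)) ∂ν| ≤ ∫ ε, |qo (y + ε) (π (y + ε))| ∂ν :=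
          by
          simpa [Real.norm_eq_abs] using
            norm_integral_le_integral_norm (fun ε => qo (y + ε) (π (y + ε)))
      _ ≤ ∫ _ε, M ∂ν := by
          apply integral_mono_of_nonneg
          · exact Filter.Eventually.of_forall fun ε => abs_nonneg _
          · exact integrable_const M
          · exact Filter.Eventually.of_forall fun ε => hqoB _ _
      _ = M := by simp
  set g : ℕ → ℝ := fun j => γ ^ (j + 1) *
    (q (x (j + 1)) (π (x (j + 1))) - ∫ ε, qo (x (j + 1) + ε) (π (x (j + 1) + ε)) ∂ν) with hg
  -- key identity for a single Bellman step
  have key : ∀ (y : S) (b : A),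
      q y b - qo y b = γ * (q (p y b) (π (p y b)) - ∫ ε, qo (p y b + ε) (π (p y b + ε)) ∂ν) := by
    intro y b
    rw [hBell y b, hBello y b]; ring
  have hg0 : g 0 = q s a - qo s a := by
    simp only [hg]
    rw [key s a, hx1]; ring
  have hgsucc : ∀ j : ℕ, g (j + 1) = γ ^ (j + 1) *
      (q (x (j + 1)) (π (x (j + 1))) - qo (x (j + 1)) (π (x (j + 1)))) := by
    intro j
    simp only [hg]
    have e : x (j + 1 + 1) = p (x (j+1)) (π (x (j+1))) := hx j
    have k := key (x (j+1)) (π (x (j+1)))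
    rw [e, k]
    ring
  have hterm : ∀ j : ℕ, γ ^ (j + 1) *
      (qo (x (j + 1)) (π (x (j + 1))) -
        ∫ ε, qo (x (j + 1) + ε) (π (x (j + 1) + ε)) ∂ν) = g j - g (j + 1) := by
    intro j
    rw [hgsucc j]; simp only [hg]; ring
  have hgbound : ∀ j : ℕ, |g j| ≤ 2 * M * γ ^ (j + 1) := by
    intro j
    simp only [hg]
    rw [abs_mul, abs_pow, abs_of_pos hγ0]
    rw [mul_comm (2 * M) _]
    apply mul_le_mul_of_nonneg_left _ (pow_nonneg hγ0.le _)
    calc |q (x (j+1)) (π (x (j+1))) - ∫ ε, qo (x (j + 1) + ε) (π (x (j + 1) + ε)) ∂ν|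
        ≤ |q (x (j+1)) (π (x (j+1)))| + |∫ ε, qo (x (j + 1) + ε) (π (x (j + 1) + ε)) ∂ν| :=
          abs_sub _ _
      _ ≤ M + M := add_le_add (hqB _ _) (hIB _)
      _ = 2 * M := by ring
  have hgtend : Filter.Tendsto g Filter.atTop (nhds 0) := by
    have h1 : Filter.Tendsto (fun j : ℕ => 2 * M * γ ^ (j + 1)) Filter.atTop (nhds 0) := by
      have := (tendsto_pow_atTop_nhds_zero_of_lt_one hγ0.le hγ1).comp
        (Filter.tendsto_add_atTop_nat 1)
      simpa using this.const_mul (2 * M)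
    have h2 : Filter.Tendsto (fun j : ℕ => -(2 * M * γ ^ (j + 1))) Filter.atTop (nhds 0) := by
      simpa using h1.neg
    refine squeeze_zero_norm ?_ h1
    intro n; exact hgbound n
  -- summability
  have hsum : Summable fun j : ℕ => ‖g j - g (j + 1)‖ := by
    apply Summable.of_nonneg_of_le (fun j => norm_nonneg _)
      (fun j => ?_) (Summable.mul_left (4 * M) (summable_geometric_of_lt_one hγ0.le hγ1))
    have : ‖g j - g (j + 1)‖ ≤ |g j| + |g (j + 1)| := norm_sub_le _ _
    refine this.trans ?_
    have h1 := hgbound j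
    have h2 := hgbound (j + 1)
    have h3 : 2 * M * γ ^ (j + 1 + 1) ≤ 2 * M * γ ^ (j + 1) := by
      apply mul_le_mul_of_nonneg_left _ (by positivity)
      exact pow_le_pow_of_le_one hγ0.le hγ1.le (by omega)
    have h4 : γ ^ (j + 1) ≤ γ ^ j :=
      pow_le_pow_of_le_one hγ0.le hγ1.le (by omega)
    nlinarith [pow_nonneg hγ0.le j, pow_nonneg hγ0.le (j+1)]
  have := (hasSum_iff_tendsto_nat_of_summable_norm hsum (a := g 0 - (0:ℝ))).mpr ?_
  · rw [sub_zero] at this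
    rw [← hg0]
    exact this.congr_fun fun j => (hterm j).symm |>.symm ▸ rfl
  · have : ∀ n : ℕ, ∑ i ∈ Finset.range n, (g i - g (i + 1)) = g 0 - g n := by
      intro n
      exact Finset.sum_range_sub' g n
    simp only [this]
    exact Filter.Tendsto.const_sub (g 0) hgtend
end

section
/- If ∇_s q^{π,o}(s, π(s)) is L-Lipschitz in s and the gradient of the j-step state propagation through true dynamics is bounded by B in operator norm, then sup_s ‖∇_s q^π(s, π(s)) − ∇_s q^{π,o}(s, π(s))‖ ≤ (γ/(1−γ)) · L · B · E_ε[‖ε‖]. -/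
/-!
Each term of the telescoping series is the gap between `∇q^{π,o}` at a state and its average
over the noisy perturbations of that state, pulled back along the propagation Jacobian. The
Lipschitz bound makes that gap at most `L · E‖ε‖`, the Jacobian contributes a factor `B`, and
summing the discount weights `γ^(j+1)` gives `γ / (1 - γ)`.
-/

open MeasureTheory

theorem norm_sub_integral_comp_add_le {E F : Type*} [NormedAddCommGroup E] [MeasurableSpace E]
    [NormedAddCommGroup F] [NormedSpace ℝ F] [CompleteSpace F]
    (ν : Measure E) [IsProbabilityMeasure ν]
    {g : E → F} {L : ℝ} (hg : ∀ x y, ‖g x - g y‖ ≤ L * ‖x - y‖) (x : E)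
    (hgint : Integrable (fun ε => g (x + ε)) ν) (hεint : Integrable (fun ε => ‖ε‖) ν) :
    ‖g x - ∫ ε, g (x + ε) ∂ν‖ ≤ L * ∫ ε, ‖ε‖ ∂ν := by
  have hmean : g x - ∫ ε, g (x + ε) ∂ν = ∫ ε, (g x - g (x + ε)) ∂ν := by
    rw [integral_sub (integrable_const _) hgint, integral_const, probReal_univ, one_smul]
  calc ‖g x - ∫ ε, g (x + ε) ∂ν‖
      ≤ ∫ ε, ‖g x - g (x + ε)‖ ∂ν := hmean ▸ norm_integral_le_integral_norm _
    _ ≤ ∫ ε, L * ‖ε‖ ∂ν := by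
        refine integral_mono ((integrable_const _).sub hgint).norm (hεint.const_mul L) fun ε => ?_
        simpa using hg x (x + ε)
    _ = L * ∫ ε, ‖ε‖ ∂ν := integral_const_mul _ _

theorem HasSum.norm_le_of_norm_le_geometric {E : Type*} [SeminormedAddCommGroup E]
    {f : ℕ → E} {a : E} {γ C : ℝ} (hf : HasSum f a) (hγ₀ : 0 ≤ γ) (hγ₁ : γ < 1)
    (hbound : ∀ j, ‖f j‖ ≤ γ ^ (j + 1) * C) : ‖a‖ ≤ γ / (1 - γ) * C := by
  have hgeom := ((hasSum_geometric_of_lt_one hγ₀ hγ₁).mul_left γ).mul_right C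
  rw [← div_eq_mul_inv] at hgeom
  exact hf.norm_le_of_bounded hgeom fun j => (hbound j).trans_eq (by ring)

theorem noisy_value_gradient_bound_general
    {S A : Type*} [NormedAddCommGroup S] [NormedSpace ℝ S] [MeasurableSpace S]
    (p : S → A → S) (π : S → A) (q qo : S → A → ℝ)
    (γ L B : ℝ) (hγ : γ ∈ Set.Ioo (0:ℝ) 1)
    (ν : Measure S) [IsProbabilityMeasure ν]   -- noise distribution
    (hεint : Integrable (fun ε : S => ‖ε‖) ν)
    -- ∇_s q^{π,o}(s,π(s)) is L-Lipschitz
    (hLip : ∀ x y : S,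
      ‖fderiv ℝ (fun u : S => qo u (π u)) x - fderiv ℝ (fun u : S => qo u (π u)) y‖ ≤
        L * ‖x - y‖)
    -- Jacobians of the j-step state propagation through the true dynamics are bounded
    (hprop : ∀ (j : ℕ) (s : S), 1 ≤ j →
      ‖fderiv ℝ ((fun u : S => p u (π u))^[j]) s‖ ≤ B)
    -- integrability of the noise-shifted value gradients
    (hgint : ∀ (j : ℕ) (s : S), Integrable (fun ε : S =>
      fderiv ℝ (fun u : S => qo u (π u)) ((fun u : S => p u (π u))^[j + 1] s + ε)) ν)
    -- the telescoping decomposition of the value-gradient difference (via the chain rule)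
    (hdecomp : ∀ s : S, HasSum
      (fun j : ℕ => γ ^ (j + 1) •
        ((fderiv ℝ (fun u : S => qo u (π u)) ((fun u : S => p u (π u))^[j + 1] s) -
            ∫ ε, fderiv ℝ (fun u : S => qo u (π u))
              ((fun u : S => p u (π u))^[j + 1] s + ε) ∂ν).comp
          (fderiv ℝ ((fun u : S => p u (π u))^[j + 1]) s)))
      (fderiv ℝ (fun u : S => q u (π u)) s - fderiv ℝ (fun u : S => qo u (π u)) s)) :
    ∀ s : S,
      ‖fderiv ℝ (fun u : S => q u (π u)) s - fderiv ℝ (fun u : S => qo u (π u)) s‖ ≤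
        γ / (1 - γ) * L * B * ∫ ε, ‖ε‖ ∂ν := by
  intro s
  set f : S → S := fun u => p u (π u)
  set g : S → (S →L[ℝ] ℝ) := fderiv ℝ (fun u : S => qo u (π u))
  have hterm : ∀ j : ℕ, ‖γ ^ (j + 1) • ((g (f^[j + 1] s) - ∫ ε, g (f^[j + 1] s + ε) ∂ν).comp
      (fderiv ℝ (f^[j + 1]) s))‖ ≤ γ ^ (j + 1) * (L * (∫ ε, ‖ε‖ ∂ν) * B) := fun j => by
    have hgap := norm_sub_integral_comp_add_le ν hLip (f^[j + 1] s) (hgint j s) hεint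
    have hjac := hprop (j + 1) s (Nat.le_add_left 1 j)
    rw [norm_smul, norm_pow, Real.norm_of_nonneg hγ.1.le]
    refine mul_le_mul_of_nonneg_left ?_ (pow_nonneg hγ.1.le _)
    calc _ ≤ _ := ContinuousLinearMap.opNorm_comp_le _ _
      _ ≤ L * (∫ ε, ‖ε‖ ∂ν) * B :=
        mul_le_mul hgap hjac (norm_nonneg _) ((norm_nonneg _).trans hgap)
  convert (hdecomp s).norm_le_of_norm_le_geometric hγ.1.le hγ.2 hterm using 1
  ring

/-- Bound on the gradient discrepancy between the true and the noisy value function: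
if `∇_s q^{π,o}(s,π(s))` is `L`-Lipschitz, the `j`-step state-propagation Jacobians are
bounded by `B`, and the telescoping gradient decomposition holds, then
`sup_s ‖∇_s q^π(s,π(s)) − ∇_s q^{π,o}(s,π(s))‖ ≤ (γ/(1−γ)) L B E_ε[‖ε‖]`. -/
theorem noisy_value_gradient_bound
    {S A : Type*} [NormedAddCommGroup S] [NormedSpace ℝ S] [MeasurableSpace S]
    (p : S → A → S) (π : S → A) (q qo : S → A → ℝ)
    (γ L B : ℝ) (hγ : γ ∈ Set.Ioo (0:ℝ) 1) (hL : 0 ≤ L) (hB : 0 ≤ B)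
    (ν : Measure S) [IsProbabilityMeasure ν]   -- noise distribution
    (hεint : Integrable (fun ε : S => ‖ε‖) ν)
    -- ∇_s q^{π,o}(s,π(s)) is L-Lipschitz
    (hLip : ∀ x y : S,
      ‖fderiv ℝ (fun u : S => qo u (π u)) x - fderiv ℝ (fun u : S => qo u (π u)) y‖ ≤
        L * ‖x - y‖)
    -- Jacobians of the j-step state propagation through the true dynamics are bounded
    (hprop : ∀ (j : ℕ) (s : S), 1 ≤ j →
      ‖fderiv ℝ ((fun u : S => p u (π u))^[j]) s‖ ≤ B)
    -- integrability of the noise-shifted value gradients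
    (hgint : ∀ (j : ℕ) (s : S), Integrable (fun ε : S =>
      fderiv ℝ (fun u : S => qo u (π u)) ((fun u : S => p u (π u))^[j + 1] s + ε)) ν)
    -- the telescoping decomposition of the value-gradient difference (via the chain rule)
    (hdecomp : ∀ s : S, HasSum
      (fun j : ℕ => γ ^ (j + 1) •
        ((fderiv ℝ (fun u : S => qo u (π u)) ((fun u : S => p u (π u))^[j + 1] s) -
            ∫ ε, fderiv ℝ (fun u : S => qo u (π u))
              ((fun u : S => p u (π u))^[j + 1] s + ε) ∂ν).comp
          (fderiv ℝ ((fun u : S => p u (π u))^[j + 1]) s)))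
      (fderiv ℝ (fun u : S => q u (π u)) s - fderiv ℝ (fun u : S => qo u (π u)) s)) :
    ∀ s : S,
      ‖fderiv ℝ (fun u : S => q u (π u)) s - fderiv ℝ (fun u : S => qo u (π u)) s‖ ≤
        γ / (1 - γ) * L * B * ∫ ε, ‖ε‖ ∂ν :=
  noisy_value_gradient_bound_general p π q qo γ L B hγ ν hεint hLip hprop hgint hdecomp
end

section
/- Under the stated continuity and boundedness conditions, the gradient of the one-step model reward error satisfies: sup_{ŝ_t, â_t} ‖∇_{â_t} r̂_{t+1} − ∇_{â_t} r_{t+1}‖ ≤ L_{∇r} B_{∇fa} c_m + B_{∇rs} B_{∇δa}. -/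
/-! Both rewards are `g := fun s => r s (π s)` composed with the dynamics, so by the chain rule,
writing `p = f + δ`,
`D(g ∘ f) - D(g ∘ p) = (Dg(f) - Dg(p)) ∘ Df - Dg(p) ∘ Dδ`.
The first term is at most `L_{∇r} ‖f - p‖ B_{∇fa} = L_{∇r} ‖δ‖ B_{∇fa}` by the Lipschitz bound on
`Dg`, the second at most `B_{∇rs} B_{∇δa}`. -/

namespace ContinuousLinearMap

variable {𝕜 E F G : Type*} [NontriviallyNormedField 𝕜]
  [NormedAddCommGroup E] [NormedSpace 𝕜 E] [NormedAddCommGroup F] [NormedSpace 𝕜 F]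
  [NormedAddCommGroup G] [NormedSpace 𝕜 G]

theorem opNorm_comp_le_of_le {h : F →L[𝕜] G} {f : E →L[𝕜] F} {a b : ℝ}
    (hh : ‖h‖ ≤ a) (hf : ‖f‖ ≤ b) : ‖h.comp f‖ ≤ a * b :=
  (opNorm_comp_le h f).trans <| mul_le_mul hh hf (norm_nonneg f) ((norm_nonneg h).trans hh)

end ContinuousLinearMap

section PerturbedComposition

variable {𝕜 E F G : Type*} [NontriviallyNormedField 𝕜]
  [NormedAddCommGroup E] [NormedSpace 𝕜 E] [NormedAddCommGroup F] [NormedSpace 𝕜 F]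
  [NormedAddCommGroup G] [NormedSpace 𝕜 G]

theorem fderiv_comp_sub_fderiv_comp_add {g : F → G} {u v : E → F} {x : E}
    (hgu : DifferentiableAt 𝕜 g (u x)) (hguv : DifferentiableAt 𝕜 g (u x + v x))
    (hu : DifferentiableAt 𝕜 u x) (hv : DifferentiableAt 𝕜 v x) :
    fderiv 𝕜 (fun a => g (u a)) x - fderiv 𝕜 (fun a => g (u a + v a)) x =
      (fderiv 𝕜 g (u x) - fderiv 𝕜 g (u x + v x)).comp (fderiv 𝕜 u x) -
        (fderiv 𝕜 g (u x + v x)).comp (fderiv 𝕜 v x) := by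
  have hcomp_u : fderiv 𝕜 (fun a => g (u a)) x = (fderiv 𝕜 g (u x)).comp (fderiv 𝕜 u x) :=
    fderiv_comp x hgu hu
  have hcomp_uv : fderiv 𝕜 (fun a => g (u a + v a)) x =
      (fderiv 𝕜 g (u x + v x)).comp (fderiv 𝕜 u x + fderiv 𝕜 v x) := by
    rw [← fderiv_add hu hv]
    exact fderiv_comp (g := g) (f := fun a => u a + v a) x hguv (hu.add hv)
  rw [hcomp_u, hcomp_uv, ContinuousLinearMap.comp_add, ContinuousLinearMap.sub_comp]
  abel

end PerturbedComposition

theorem one_step_reward_gradient_error_general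
    {S A : Type*} [NormedAddCommGroup S] [NormedSpace ℝ S]
    [NormedAddCommGroup A] [NormedSpace ℝ A]
    (p f δ : S → A → S) (r : S → A → ℝ) (π : S → A)
    (Lr Bfa Brs Bδa cm : ℝ)
    (hLr : 0 ≤ Lr)
    -- p(s,a) = f(s,a) + δ(s,a)
    (hpf : ∀ s a, p s a = f s a + δ s a)
    -- differentiability assumptions
    (hrdiff : Differentiable ℝ (fun u : S => r u (π u)))
    (hfdiff : ∀ s, Differentiable ℝ (fun a : A => f s a))
    (hδdiff : ∀ s, Differentiable ℝ (fun a : A => δ s a))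
    -- ∇_s r(s, π(s)) is Lr-Lipschitz
    (hrLip : ∀ x y : S,
      ‖fderiv ℝ (fun u : S => r u (π u)) x - fderiv ℝ (fun u : S => r u (π u)) y‖ ≤
        Lr * ‖x - y‖)
    -- boundedness conditions
    (hBfa' : ∀ s a, ‖fderiv ℝ (fun a' : A => f s a') a‖ ≤ Bfa)
    (hBrs' : ∀ s, ‖fderiv ℝ (fun u : S => r u (π u)) s‖ ≤ Brs)
    (hBδa' : ∀ s a, ‖fderiv ℝ (fun a' : A => δ s a') a‖ ≤ Bδa)
    -- one-step model state error bound
    (hstate : ∀ s a, ‖δ s a‖ ≤ cm) :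
    ∀ (sh : S) (ah : A),
      ‖fderiv ℝ (fun a : A => r (f sh a) (π (f sh a))) ah -
          fderiv ℝ (fun a : A => r (p sh a) (π (p sh a))) ah‖ ≤
        Lr * Bfa * cm + Brs * Bδa := by
  intro sh ah
  set g : S → ℝ := fun u => r u (π u)
  have hp : p sh = fun a => f sh a + δ sh a := funext (hpf sh)
  have hreward_lip : ‖fderiv ℝ g (f sh ah) - fderiv ℝ g (f sh ah + δ sh ah)‖ ≤ Lr * cm :=
    calc _ ≤ Lr * ‖f sh ah - (f sh ah + δ sh ah)‖ := hrLip _ _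
      _ = Lr * ‖δ sh ah‖ := by rw [sub_add_cancel_left, norm_neg]
      _ ≤ Lr * cm := mul_le_mul_of_nonneg_left (hstate sh ah) hLr
  change ‖fderiv ℝ (fun a => g (f sh a)) ah - fderiv ℝ (fun a => g (p sh a)) ah‖ ≤ _
  rw [hp, fderiv_comp_sub_fderiv_comp_add (hrdiff _) (hrdiff _) (hfdiff sh ah) (hδdiff sh ah)]
  calc _ ≤ Lr * cm * Bfa + Brs * Bδa :=
        (norm_sub_le _ _).trans <| add_le_add
          (ContinuousLinearMap.opNorm_comp_le_of_le hreward_lip (hBfa' sh ah))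
          (ContinuousLinearMap.opNorm_comp_le_of_le (hBrs' _) (hBδa' sh ah))
    _ = Lr * Bfa * cm + Brs * Bδa := by ring

/-- One-step model reward-gradient error bound:
`sup ‖∇_{ah} r̂_{t+1} − ∇_{ah} r_{t+1}‖ ≤ L_{∇r} B_{∇fa} c_m + B_{∇rs} B_{∇δa}`. -/
theorem one_step_reward_gradient_error
    {S A : Type*} [NormedAddCommGroup S] [NormedSpace ℝ S]
    [NormedAddCommGroup A] [NormedSpace ℝ A]
    (p f δ : S → A → S) (r : S → A → ℝ) (π : S → A)
    (Lr Bfa Brs Bδa cm : ℝ)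
    (hLr : 0 ≤ Lr) (hBfa : 0 ≤ Bfa) (hBrs : 0 ≤ Brs) (hBδa : 0 ≤ Bδa) (hcm : 0 ≤ cm)
    -- p(s,a) = f(s,a) + δ(s,a)
    (hpf : ∀ s a, p s a = f s a + δ s a)
    -- differentiability assumptions
    (hrdiff : Differentiable ℝ (fun u : S => r u (π u)))
    (hfdiff : ∀ s, Differentiable ℝ (fun a : A => f s a))
    (hδdiff : ∀ s, Differentiable ℝ (fun a : A => δ s a))
    -- ∇_s r(s, π(s)) is Lr-Lipschitz
    (hrLip : ∀ x y : S,
      ‖fderiv ℝ (fun u : S => r u (π u)) x - fderiv ℝ (fun u : S => r u (π u)) y‖ ≤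
        Lr * ‖x - y‖)
    -- boundedness conditions
    (hBfa' : ∀ s a, ‖fderiv ℝ (fun a' : A => f s a') a‖ ≤ Bfa)
    (hBrs' : ∀ s, ‖fderiv ℝ (fun u : S => r u (π u)) s‖ ≤ Brs)
    (hBδa' : ∀ s a, ‖fderiv ℝ (fun a' : A => δ s a') a‖ ≤ Bδa)
    -- one-step model state error bound
    (hstate : ∀ s a, ‖δ s a‖ ≤ cm) :
    ∀ (sh : S) (ah : A),
      ‖fderiv ℝ (fun a : A => r (f sh a) (π (f sh a))) ah -
          fderiv ℝ (fun a : A => r (p sh a) (π (p sh a))) ah‖ ≤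
        Lr * Bfa * cm + Brs * Bδa :=
  one_step_reward_gradient_error_general p f δ r π Lr Bfa Brs Bδa cm hLr hpf hrdiff hfdiff hδdiff
    hrLip hBfa' hBrs' hBδa' hstate
end

section
/- For the zero-step horizon, the unified policy gradient error is bounded by ‖∇_θ J_0(θ) − ∇_θ J(θ)‖ ≤ B_{∇θ} (B_{qa} + c_{d2} E_ε[‖ε‖]), i.e., it depends only on the Q-value approximation error and observation noise, not on the model error. -/
open MeasureTheory

/-- Zero-horizon unified PG error bound:
`‖∇_θ J_0(θ) − ∇_θ J(θ)‖ ≤ B_{∇θ} (B_{qa} + c_{d2} E_ε[‖ε‖])`. -/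
theorem zero_step_pg_error_bound
    {S A Θ : Type*}
    [NormedAddCommGroup S] [NormedSpace ℝ S] [MeasurableSpace S]
    [NormedAddCommGroup A] [NormedSpace ℝ A]
    [NormedAddCommGroup Θ] [NormedSpace ℝ Θ]
    (μ : Measure S) [IsProbabilityMeasure μ]   -- state distribution
    (ν : Measure S) [IsProbabilityMeasure ν]   -- observation-noise distribution
    (q qo Qw : S → A → ℝ) (π : Θ → S → A) (θ : Θ)
    (Bqa cd2 Bθ : ℝ) (hBqa : 0 ≤ Bqa) (hcd2 : 0 ≤ cd2) (hBθ : 0 ≤ Bθ)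
    (hεint : Integrable (fun ε : S => ‖ε‖) ν)
    -- ‖∇_a Q_w − ∇_a q^{π,o}‖ ≤ B_{qa}
    (hQ : ∀ s a, ‖fderiv ℝ (fun a' : A => Qw s a') a -
        fderiv ℝ (fun a' : A => qo s a') a‖ ≤ Bqa)
    -- ‖∇_a q^{π,o} − ∇_a q^π‖ ≤ c_{d2} E_ε[‖ε‖]
    (hqo : ∀ s a, ‖fderiv ℝ (fun a' : A => qo s a') a -
        fderiv ℝ (fun a' : A => q s a') a‖ ≤ cd2 * ∫ ε, ‖ε‖ ∂ν)
    -- ‖∇_θ π_θ(s)‖ ≤ B_{∇θ}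
    (hπ : ∀ s, ‖fderiv ℝ (fun θ' : Θ => π θ' s) θ‖ ≤ Bθ)
    -- integrability of both policy-gradient integrands
    (hint0 : Integrable (fun s =>
      (fderiv ℝ (fun a' : A => Qw s a') (π θ s)).comp
        (fderiv ℝ (fun θ' : Θ => π θ' s) θ)) μ)
    (hintq : Integrable (fun s =>
      (fderiv ℝ (fun a' : A => q s a') (π θ s)).comp
        (fderiv ℝ (fun θ' : Θ => π θ' s) θ)) μ) :
    ‖(∫ s, (fderiv ℝ (fun a' : A => Qw s a') (π θ s)).comp
          (fderiv ℝ (fun θ' : Θ => π θ' s) θ) ∂μ) -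
        ∫ s, (fderiv ℝ (fun a' : A => q s a') (π θ s)).comp
          (fderiv ℝ (fun θ' : Θ => π θ' s) θ) ∂μ‖ ≤
      Bθ * (Bqa + cd2 * ∫ ε, ‖ε‖ ∂ν) := by
  rw [← integral_sub hint0 hintq]
  have key : ∀ s : S, ‖(fderiv ℝ (fun a' : A => Qw s a') (π θ s)).comp
        (fderiv ℝ (fun θ' : Θ => π θ' s) θ) -
      (fderiv ℝ (fun a' : A => q s a') (π θ s)).comp
        (fderiv ℝ (fun θ' : Θ => π θ' s) θ)‖ ≤ Bθ * (Bqa + cd2 * ∫ ε, ‖ε‖ ∂ν) := by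
    intro s
    have h1 : (fderiv ℝ (fun a' : A => Qw s a') (π θ s)).comp
          (fderiv ℝ (fun θ' : Θ => π θ' s) θ) -
        (fderiv ℝ (fun a' : A => q s a') (π θ s)).comp
          (fderiv ℝ (fun θ' : Θ => π θ' s) θ) =
        (fderiv ℝ (fun a' : A => Qw s a') (π θ s) -
          fderiv ℝ (fun a' : A => q s a') (π θ s)).comp
          (fderiv ℝ (fun θ' : Θ => π θ' s) θ) := by
      ext x; simp
    rw [h1]
    calc ‖(fderiv ℝ (fun a' : A => Qw s a') (π θ s) -
          fderiv ℝ (fun a' : A => q s a') (π θ s)).comp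
          (fderiv ℝ (fun θ' : Θ => π θ' s) θ)‖
        ≤ ‖fderiv ℝ (fun a' : A => Qw s a') (π θ s) -
            fderiv ℝ (fun a' : A => q s a') (π θ s)‖ *
          ‖fderiv ℝ (fun θ' : Θ => π θ' s) θ‖ := ContinuousLinearMap.opNorm_comp_le _ _
      _ ≤ (Bqa + cd2 * ∫ ε, ‖ε‖ ∂ν) * Bθ := by
          refine mul_le_mul ?_ (hπ s) (norm_nonneg _) ?_
          · have := norm_sub_le_norm_sub_add_norm_sub
              (fderiv ℝ (fun a' : A => Qw s a') (π θ s))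
              (fderiv ℝ (fun a' : A => qo s a') (π θ s))
              (fderiv ℝ (fun a' : A => q s a') (π θ s))
            exact this.trans (add_le_add (hQ s (π θ s)) (hqo s (π θ s)))
          · have h0 : (0:ℝ) ≤ ∫ ε, ‖ε‖ ∂ν := integral_nonneg fun _ => norm_nonneg _
            positivity
      _ = Bθ * (Bqa + cd2 * ∫ ε, ‖ε‖ ∂ν) := mul_comm _ _
  calc ‖∫ s, ((fderiv ℝ (fun a' : A => Qw s a') (π θ s)).comp
          (fderiv ℝ (fun θ' : Θ => π θ' s) θ) -
        (fderiv ℝ (fun a' : A => q s a') (π θ s)).comp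
          (fderiv ℝ (fun θ' : Θ => π θ' s) θ)) ∂μ‖
      ≤ ∫ s, ‖(fderiv ℝ (fun a' : A => Qw s a') (π θ s)).comp
          (fderiv ℝ (fun θ' : Θ => π θ' s) θ) -
        (fderiv ℝ (fun a' : A => q s a') (π θ s)).comp
          (fderiv ℝ (fun θ' : Θ => π θ' s) θ)‖ ∂μ := norm_integral_le_integral_norm _
    _ ≤ ∫ _s, Bθ * (Bqa + cd2 * ∫ ε, ‖ε‖ ∂ν) ∂μ :=
        integral_mono_of_nonneg (Filter.Eventually.of_forall fun s => norm_nonneg _)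
          (integrable_const _) (Filter.Eventually.of_forall key)
    _ = Bθ * (Bqa + cd2 * ∫ ε, ‖ε‖ ∂ν) := by simp
end

section
/- If for each horizon k the reward-gradient error satisfies sup‖∇_{â_t} r̂_{t+k} − ∇_{â_t} r_{t+k}‖ ≤ U_r(k) and the value-gradient error satisfies sup‖∇_{â_t} Q̂_{w,t+n} − ∇_{â_t} q^π_{t+n}‖ ≤ U_q(n), then the unified PG bias satisfies ‖∇_θ J_n(θ) − ∇_θ J(θ)‖ ≤ B_{∇θ} (Σ_{k=0}^{n-1} γ^k U_r(k) + γ^n U_q(n)). -/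
open MeasureTheory

/-- Unified PG bias bound: given the gradient-difference decomposition of
`∇_θ J_n − ∇_θ J` and per-horizon error bounds `U_r`, `U_q`,
`‖∇_θ J_n(θ) − ∇_θ J(θ)‖ ≤ B_{∇θ} (Σ_{k<n} γ^k U_r(k) + γ^n U_q(n))`. -/
theorem unified_pg_bias_bound
    {S A Θ : Type*}
    [NormedAddCommGroup S] [NormedSpace ℝ S] [MeasurableSpace S]
    [NormedAddCommGroup A] [NormedSpace ℝ A]
    [NormedAddCommGroup Θ] [NormedSpace ℝ Θ]
    (μ : Measure S) [IsProbabilityMeasure μ]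
    (n : ℕ) (γ Bθ : ℝ) (hγ : γ ∈ Set.Ioo (0:ℝ) 1) (hBθ0 : 0 ≤ Bθ)
    (Ur Uq : ℕ → ℝ)
    -- reward gradients along model and true rollouts, as functions of the first action
    (Drhat Dr : ℕ → S → (A →L[ℝ] ℝ))
    -- value gradients (estimated and true), as functions of the first action
    (DQ Dq : S → (A →L[ℝ] ℝ))
    -- policy gradient ∇_θ π_θ(s)
    (Dπ : S → (Θ →L[ℝ] A))
    (gJn gJ : Θ →L[ℝ] ℝ)
    -- decomposition of the unified-PG bias (from the n-step Bellman expansion)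
    (hint : Integrable (fun s =>
      ((∑ k ∈ Finset.range n, γ ^ k • (Drhat k s - Dr k s)) +
        γ ^ n • (DQ s - Dq s)).comp (Dπ s)) μ)
    (hdecomp : gJn - gJ = ∫ s,
      ((∑ k ∈ Finset.range n, γ ^ k • (Drhat k s - Dr k s)) +
        γ ^ n • (DQ s - Dq s)).comp (Dπ s) ∂μ)
    -- per-horizon error bounds
    (hUr : ∀ k, ∀ s, ‖Drhat k s - Dr k s‖ ≤ Ur k)
    (hUq : ∀ s, ‖DQ s - Dq s‖ ≤ Uq n)
    -- bounded policy gradient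
    (hDπ : ∀ s, ‖Dπ s‖ ≤ Bθ) :
    ‖gJn - gJ‖ ≤ Bθ * ((∑ k ∈ Finset.range n, γ ^ k * Ur k) + γ ^ n * Uq n) := by
  have hS : Nonempty S := by
    by_contra h
    have h1 := measure_univ (μ := μ)
    rw [Set.univ_eq_empty_iff.mpr (not_nonempty_iff.mp h)] at h1
    simp at h1
  obtain ⟨s₀⟩ := hS
  have hγn : ∀ k : ℕ, (0:ℝ) ≤ γ ^ k := fun k => pow_nonneg hγ.1.le k
  have hUrnn : ∀ k, 0 ≤ Ur k := fun k => (norm_nonneg _).trans (hUr k s₀)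
  have hUqnn : 0 ≤ Uq n := (norm_nonneg _).trans (hUq s₀)
  set C := (∑ k ∈ Finset.range n, γ ^ k * Ur k) + γ ^ n * Uq n with hC
  have hCnn : 0 ≤ C := by
    apply add_nonneg
    · exact Finset.sum_nonneg fun k _ => mul_nonneg (hγn k) (hUrnn k)
    · exact mul_nonneg (hγn n) hUqnn
  have hbound : ∀ s, ‖((∑ k ∈ Finset.range n, γ ^ k • (Drhat k s - Dr k s)) +
      γ ^ n • (DQ s - Dq s)).comp (Dπ s)‖ ≤ C * Bθ := by
    intro s
    have h1 : ‖(∑ k ∈ Finset.range n, γ ^ k • (Drhat k s - Dr k s)) +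
        γ ^ n • (DQ s - Dq s)‖ ≤ C := by
      refine (norm_add_le _ _).trans ?_
      apply add_le_add
      · refine (norm_sum_le _ _).trans ?_
        apply Finset.sum_le_sum
        intro k _
        have he : ‖γ ^ k • (Drhat k s - Dr k s)‖ = ‖γ ^ k‖ * ‖Drhat k s - Dr k s‖ :=
          norm_smul (γ ^ k) (Drhat k s - Dr k s)
        rw [he, norm_pow, Real.norm_eq_abs, abs_of_nonneg hγ.1.le]
        exact mul_le_mul_of_nonneg_left (hUr k s) (hγn k)
      · have he : ‖γ ^ n • (DQ s - Dq s)‖ = ‖γ ^ n‖ * ‖DQ s - Dq s‖ :=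
          norm_smul (γ ^ n) (DQ s - Dq s)
        rw [he, norm_pow, Real.norm_eq_abs, abs_of_nonneg hγ.1.le]
        exact mul_le_mul_of_nonneg_left (hUq s) (hγn n)
    calc ‖((∑ k ∈ Finset.range n, γ ^ k • (Drhat k s - Dr k s)) +
        γ ^ n • (DQ s - Dq s)).comp (Dπ s)‖
        ≤ ‖(∑ k ∈ Finset.range n, γ ^ k • (Drhat k s - Dr k s)) +
          γ ^ n • (DQ s - Dq s)‖ * ‖Dπ s‖ := ContinuousLinearMap.opNorm_comp_le _ _
      _ ≤ C * Bθ := mul_le_mul h1 (hDπ s) (norm_nonneg _) hCnn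
  rw [hdecomp]
  have key : ‖∫ s, ((∑ k ∈ Finset.range n, γ ^ k • (Drhat k s - Dr k s)) +
      γ ^ n • (DQ s - Dq s)).comp (Dπ s) ∂μ‖ ≤ C * Bθ := by
    calc _ ≤ C * Bθ * (μ Set.univ).toReal :=
          norm_integral_le_of_norm_le_const (Filter.Eventually.of_forall hbound)
      _ = C * Bθ := by simp
  linarith [key]
end

section
/- If ∇_s f(s, π(s)) is L_{∇f}-Lipschitz in s and ‖∇_s δ(s, π(s))‖ ≤ B_{∇δs}, then the step-i Jacobian discrepancy satisfies Δ_{∇s,t+i} = sup‖∇_{ŝ_{t+i}} ŝ_{t+i+1} − ∇_{s_{t+i}} s_{t+i+1}‖ ≤ L_{∇f} Δ_{s,t+i} + B_{∇δs}, where Δ_{s,t+i} is the supremum state discrepancy at step i. -/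
/-- Step-`i` Jacobian discrepancy bound:
if `∇_s f(s,π(s))` is `L`-Lipschitz and `‖∇_s δ(s,π(s))‖ ≤ B_{∇δs}`, then for states
`x = ŝ_{t+i}`, `y = s_{t+i}` with `‖x − y‖ ≤ Δ` (the step-`i` state discrepancy),
`‖∇_x f(x,π(x)) − ∇_y p(y,π(y))‖ ≤ L Δ + B_{∇δs}`. -/
theorem jacobian_discrepancy_bound
    {S A : Type*} [NormedAddCommGroup S] [NormedSpace ℝ S]
    [NormedAddCommGroup A] [NormedSpace ℝ A]
    (p f δ : S → A → S) (π : S → A) (L Bδs Δ : ℝ)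
    (hL : 0 ≤ L) (hBδs : 0 ≤ Bδs) (hΔ : 0 ≤ Δ)
    -- p(s,a) = f(s,a) + δ(s,a)
    (hpf : ∀ s a, p s a = f s a + δ s a)
    -- differentiability
    (hf : Differentiable ℝ (fun u : S => f u (π u)))
    (hδ : Differentiable ℝ (fun u : S => δ u (π u)))
    -- ∇_s f(s, π(s)) is L-Lipschitz
    (hfLip : ∀ x y : S,
      ‖fderiv ℝ (fun u : S => f u (π u)) x - fderiv ℝ (fun u : S => f u (π u)) y‖ ≤
        L * ‖x - y‖)
    -- ‖∇_s δ(s, π(s))‖ ≤ B_{∇δs}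
    (hδB : ∀ s : S, ‖fderiv ℝ (fun u : S => δ u (π u)) s‖ ≤ Bδs) :
    ∀ x y : S, ‖x - y‖ ≤ Δ →
      ‖fderiv ℝ (fun u : S => f u (π u)) x - fderiv ℝ (fun u : S => p u (π u)) y‖ ≤
        L * Δ + Bδs := by
  intro x y hxy
  have hp : (fun u : S => p u (π u)) = fun u : S => f u (π u) + δ u (π u) := by
    funext u; rw [hpf]
  have hd : fderiv ℝ (fun u : S => p u (π u)) y
      = fderiv ℝ (fun u : S => f u (π u)) y + fderiv ℝ (fun u : S => δ u (π u)) y := by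
    rw [hp]; exact fderiv_add (hf y) (hδ y)
  rw [hd]
  calc ‖fderiv ℝ (fun u : S => f u (π u)) x -
        (fderiv ℝ (fun u : S => f u (π u)) y + fderiv ℝ (fun u : S => δ u (π u)) y)‖
      ≤ ‖fderiv ℝ (fun u : S => f u (π u)) x - fderiv ℝ (fun u : S => f u (π u)) y‖
        + ‖fderiv ℝ (fun u : S => δ u (π u)) y‖ := by
        rw [sub_add_eq_sub_sub]; exact norm_sub_le _ _
    _ ≤ L * Δ + Bδs := by
        have := hfLip x y
        have h2 := hδB y
        nlinarith [mul_le_mul_of_nonneg_left hxy hL]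
end
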